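/- In the monoid algebra R[[ℏ]][PS(d)] of the monoid of partitioned permutations of [d] under the extended multiplication ⊙, the element ζ_ℏ := Σ_{α ∈ S(d)} ℏ^{|α|} (𝟎_α, α) is invertible; consequently the extended Möbius function μ_ℏ with μ_ℏ ⊛ ζ_ℏ = ζ_ℏ ⊛ μ_ℏ = δ exists. -/

import Mathlib

open Equiv

/-- The setoid on `β` whose classes are the supports of the cycles of `α`
(fixed points giving singleton classes); this is the partition `𝟎_α`. -/
def cycleSetoid {β : Type*} (α : Equiv.Perm β) : Setoid β :=
  ⟨α.SameCycle, ⟨fun x => Equiv.Perm.SameCycle.refl α x, fun h => h.symm, fun h h' => h.trans h'⟩⟩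

/-- Number of blocks of a set partition (encoded as a setoid). -/
noncomputable def numBlocks {β : Type*} (s : Setoid β) : ℕ :=
  Nat.card (Quotient s)

/-- Number of cycles of a permutation, counting fixed points as cycles. -/
noncomputable def numCycles {β : Type*} (α : Equiv.Perm β) : ℕ :=
  numBlocks (cycleSetoid α)

/-- The colength `|α| = d - #cycles(α)` of a permutation of `Fin d`. -/
noncomputable def permColength {d : ℕ} (α : Equiv.Perm (Fin d)) : ℕ :=
  d - numCycles α

/-- A partitioned permutation of `[d]`: a pair `(𝒜, α)` of a set partition `𝒜` of `[d]`
and a permutation `α` of `[d]` such that `𝟎_α ≤ 𝒜`, i.e. every cycle support of `α`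
is contained in a block of `𝒜`. -/
structure PartPerm (d : ℕ) where
  part : Setoid (Fin d)
  perm : Equiv.Perm (Fin d)
  refines : ∀ x y : Fin d, perm.SameCycle x y → part.r x y

theorem PartPerm.ext' {d : ℕ} {p q : PartPerm d}
    (h1 : p.part = q.part) (h2 : p.perm = q.perm) : p = q := by
  cases p; cases q; simp_all

/-- Colength `|(𝒜,α)| = 2|𝒜| - |α| = 2(d - #𝒜) - (d - #cycles α)`, as an integer. -/
noncomputable def pairColength {d : ℕ} (s : Setoid (Fin d)) (σ : Equiv.Perm (Fin d)) : ℤ :=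
  2 * ((d : ℤ) - numBlocks s) - ((d : ℤ) - numCycles σ)

noncomputable def PartPerm.colength {d : ℕ} (p : PartPerm d) : ℤ :=
  pairColength p.part p.perm

/-- Cycle supports of `α∘β` lie in blocks of `𝒜 ∨ ℬ`: closure of partitioned
permutations under the extended multiplication. -/
theorem refines_mul {d : ℕ} {A B : Setoid (Fin d)} {α β : Equiv.Perm (Fin d)}
    (hA : ∀ x y, α.SameCycle x y → A.r x y) (hB : ∀ x y, β.SameCycle x y → B.r x y) :
    ∀ x y, (α * β).SameCycle x y → (A ⊔ B).r x y := by
  classical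
  have hle1 : ∀ x y : Fin d, A.r x y → (A ⊔ B).r x y := fun x y h =>
    Setoid.le_def.mp (le_sup_left : A ≤ A ⊔ B) h
  have hle2 : ∀ x y : Fin d, B.r x y → (A ⊔ B).r x y := fun x y h =>
    Setoid.le_def.mp (le_sup_right : B ≤ A ⊔ B) h
  have step : ∀ z : Fin d, (A ⊔ B).r z ((α * β) z) := by
    intro z
    refine (A ⊔ B).trans (hle2 z (β z) (hB z (β z) ⟨1, by simp⟩)) ?_
    exact hle1 (β z) (α (β z)) (hA (β z) (α (β z)) ⟨1, by simp⟩)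
  have key : ∀ n : ℕ, ∀ z : Fin d, (A ⊔ B).r z (((α * β) ^ n) z) := by
    intro n
    induction n with
    | zero => intro z; simpa using (A ⊔ B).refl z
    | succ n ih =>
      intro z
      have h1 := ih z
      have h2 := step (((α * β) ^ n) z)
      have h3 : ((α * β) ^ (n + 1)) z = (α * β) (((α * β) ^ n) z) := by
        rw [pow_succ']
        simp [Equiv.Perm.mul_apply]
      rw [h3]
      exact (A ⊔ B).trans h1 h2
  intro x y h
  obtain ⟨i, hi0, _, hi⟩ := Equiv.Perm.SameCycle.exists_pow_eq (α * β) h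
  rw [← hi]
  exact key i x

/-- The unit partitioned permutation `(𝟎_id, id)`. -/
def PartPerm.one (d : ℕ) : PartPerm d :=
  ⟨⊥, 1, fun x y h => by
    have hxy : x = y := Equiv.Perm.sameCycle_one.mp h
    subst hxy
    exact (⊥ : Setoid (Fin d)).refl x⟩

/-- The extended multiplication `(𝒜,α) ⊙ (ℬ,β) = (𝒜 ∨ ℬ, α∘β)` of partitioned
permutations. -/
def PartPerm.mul {d : ℕ} (p q : PartPerm d) : PartPerm d :=
  ⟨p.part ⊔ q.part, p.perm * q.perm, refines_mul p.refines q.refines⟩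

instance (d : ℕ) : Monoid (PartPerm d) where
  mul := PartPerm.mul
  one := PartPerm.one d
  mul_assoc p q r := PartPerm.ext' (sup_assoc _ _ _) (mul_assoc _ _ _)
  one_mul p := PartPerm.ext' (bot_sup_eq _) (one_mul _)
  mul_one p := PartPerm.ext' (sup_bot_eq _) (mul_one _)

open scoped Classical in
/-- The extended zeta function `ζ_ℏ = Σ_{α ∈ S(d)} ℏ^{|α|} (𝟎_α, α)`, viewed as an element
of the monoid algebra `R[[ℏ]][PS(d)]` of the monoid of partitioned permutations of `[d]`. -/
noncomputable def zetaHbar (R : Type*) [CommRing R] (d : ℕ) :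
    MonoidAlgebra (PowerSeries R) (PartPerm d) :=
  ∑ α : Equiv.Perm (Fin d),
    MonoidAlgebra.single (⟨cycleSetoid α, α, fun _ _ h => h⟩ : PartPerm d)
      ((PowerSeries.X : PowerSeries R) ^ permColength α)

/-!
Reducing coefficients modulo `ℏ` sends `ζ_ℏ` to the delta function at the unit, since `|α| = 0`
only for `α = id`. As `PS(d)` is finite, `R[[ℏ]][PS(d)]` is a finite free `R[[ℏ]]`-algebra, so an
element is a unit as soon as its norm `det (x ↦ ζ_ℏ x)` is. The norm commutes with reduction
modulo `ℏ`, hence has constant coefficient `1` and is a unit of `R[[ℏ]]`.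
-/

theorem Algebra.isUnit_of_isUnit_norm {K A : Type*} [CommRing K] [Ring A] [Algebra K A]
    [Module.Free K A] [Module.Finite K A] {a : A} (h : IsUnit (Algebra.norm K a)) : IsUnit a :=
  Algebra.lmul_isUnit_iff.mp ((LinearMap.isUnit_iff_isUnit_det _).mpr h)

namespace MonoidAlgebra

variable {M K L : Type*} [Monoid M] [CommRing K] [CommRing L]

theorem map_leftMulMatrix_basis [Fintype M] [DecidableEq M] (f : K →+* L)
    (a : MonoidAlgebra K M) :
    (Algebra.leftMulMatrix (basis M K) a).map f =
      Algebra.leftMulMatrix (basis M L) (mapRingHom M f a) := by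
  ext i j
  rw [Matrix.map_apply, Algebra.leftMulMatrix_eq_repr_mul, Algebra.leftMulMatrix_eq_repr_mul,
    basis_apply, basis_apply, ← map_one f, ← mapRingHom_single, ← map_mul]
  exact (coeff_mapRingHom f _ i).symm

variable [Finite M]

theorem map_norm (f : K →+* L) (a : MonoidAlgebra K M) :
    f (Algebra.norm K a) = Algebra.norm L (mapRingHom M f a) := by
  classical
  have := Fintype.ofFinite M
  rw [Algebra.norm_eq_matrix_det (basis M K), Algebra.norm_eq_matrix_det (basis M L),
    RingHom.map_det, RingHom.mapMatrix_apply, map_leftMulMatrix_basis]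

instance isLocalHom_mapRingHom (f : K →+* L) [IsLocalHom f] : IsLocalHom (mapRingHom M f) where
  map_nonunit a ha := Algebra.isUnit_of_isUnit_norm <|
    IsLocalHom.map_nonunit (f := f) _ (map_norm f a ▸ ha.map (Algebra.norm L))

end MonoidAlgebra

instance PowerSeries.isLocalHom_constantCoeff {R : Type*} [CommRing R] :
    IsLocalHom (PowerSeries.constantCoeff (R := R)) :=
  ⟨fun _ => PowerSeries.isUnit_iff_constantCoeff.mpr⟩

instance Setoid.finite {α : Type*} [Finite α] : Finite (Setoid α) :=
  Finite.of_injective (fun s : Setoid α => (s : α → α → Prop)) fun _ _ h =>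
    Setoid.ext fun a b => iff_of_eq (congrFun₂ h a b)

instance PartPerm.finite (d : ℕ) : Finite (PartPerm d) :=
  Finite.of_injective (fun p : PartPerm d => (p.part, p.perm)) fun _ _ h =>
    PartPerm.ext' (congrArg Prod.fst h) (congrArg Prod.snd h)

section NumCycles

variable {β : Type*}

theorem cycleSetoid_one : cycleSetoid (1 : Perm β) = ⊥ :=
  Setoid.ext fun _ _ => Perm.sameCycle_one

variable [Finite β]

theorem numCycles_le_card (α : Perm β) : numCycles α ≤ Nat.card β :=
  Nat.card_le_card_of_surjective _ Quotient.mk_surjective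

theorem numCycles_eq_card_iff {α : Perm β} : numCycles α = Nat.card β ↔ α = 1 := by
  calc numCycles α = Nat.card β
      ↔ Function.Injective (Quotient.mk (cycleSetoid α)) := by
        refine ⟨fun h => (Quotient.mk_surjective.bijective_of_nat_card_le h.ge).1, fun h => ?_⟩
        exact (Nat.card_eq_of_bijective _ ⟨h, Quotient.mk_surjective⟩).symm
    _ ↔ ∀ x y, α.SameCycle x y → x = y := by
        simp only [Function.Injective, Quotient.eq]
        rfl
    _ ↔ α = 1 := by
        refine ⟨fun h => Equiv.ext fun x => (h x (α x) ⟨1, rfl⟩).symm, ?_⟩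
        rintro rfl x y
        exact Perm.sameCycle_one.mp

end NumCycles

theorem permColength_eq_zero_iff {d : ℕ} {α : Perm (Fin d)} : permColength α = 0 ↔ α = 1 := by
  rw [permColength, Nat.sub_eq_zero_iff_le, ← numCycles_eq_card_iff, Nat.card_fin]
  exact ⟨fun h => le_antisymm ((numCycles_le_card α).trans_eq (Nat.card_fin d)) h, Eq.ge⟩

theorem mapRingHom_constantCoeff_zetaHbar (R : Type*) [CommRing R] (d : ℕ) :
    MonoidAlgebra.mapRingHom _ PowerSeries.constantCoeff (zetaHbar R d) = 1 := by
  classical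
  rw [zetaHbar, map_sum, Finset.sum_eq_single (1 : Perm (Fin d))]
  · have hone : (⟨cycleSetoid 1, 1, fun _ _ h => h⟩ : PartPerm d) = 1 :=
      PartPerm.ext' cycleSetoid_one rfl
    rw [hone, permColength_eq_zero_iff.mpr rfl, pow_zero, MonoidAlgebra.mapRingHom_single,
      map_one, MonoidAlgebra.one_def]
  · intro α _ hα
    rw [MonoidAlgebra.mapRingHom_single, map_pow, PowerSeries.constantCoeff_X,
      zero_pow (mt permColength_eq_zero_iff.mp hα), MonoidAlgebra.single_zero]
  · exact absurd (Finset.mem_univ _)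

/-- `δ` is the `1` of the monoid algebra. -/
theorem zetaHbar_isUnit (R : Type*) [CommRing R] (d : ℕ) :
    IsUnit (zetaHbar R d) ∧
      ∃ μ : MonoidAlgebra (PowerSeries R) (PartPerm d),
        μ * zetaHbar R d = 1 ∧ zetaHbar R d * μ = 1 := by
  have hunit : IsUnit (zetaHbar R d) := by
    refine IsUnit.of_map (MonoidAlgebra.mapRingHom _ PowerSeries.constantCoeff) _ ?_
    rw [mapRingHom_constantCoeff_zetaHbar]
    exact isUnit_one
  exact ⟨hunit, _, hunit.val_inv_mul, hunit.mul_val_inv⟩
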